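/- Let U ⊆ ℝ² be open and connected and let (E_mn)_{1≤m,n≤3} be a symmetric matrix field of smooth real-valued functions on U, regarded as a z-independent (2D) strain (indices 1,2 are planar, index 3 is z, and ∂₃E_mn = 0). Then the full three-dimensional incompatibility tensor η_ik = ε_ipm ε_kqn ∂_p∂_q E_mn vanishes identically on U if and only if there exist real constants K, a₁, a₂, b such that on U: (i) ∂₂²E₁₁ + ∂₁²E₂₂ − 2∂₁∂₂E₁₂ = 0; (ii) ∂₁E₂₃ − ∂₂E₁₃ = K; and (iii) E₃₃(x₁,x₂) = a₁x₁ + a₂x₂ + b. -/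

import Mathlib

open MeasureTheory Real

/-- Partial derivative in the `α`-th coordinate direction of a function on `ℝ²`. -/
noncomputable def pd (α : Fin 2) (f : EuclideanSpace ℝ (Fin 2) → ℝ) :
    EuclideanSpace ℝ (Fin 2) → ℝ :=
  fun x => fderiv ℝ f x (EuclideanSpace.single α 1)

/-- The three-dimensional partial derivative `∂_p` acting on a `z`-independent (2D)
field: for the planar indices `p = 0, 1` it is the planar partial derivative, and
`∂_z = ∂₂` vanishes identically. -/
noncomputable def pdz (p : Fin 3) (f : EuclideanSpace ℝ (Fin 2) → ℝ) :
    EuclideanSpace ℝ (Fin 2) → ℝ :=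
  if h : (p : ℕ) < 2 then pd ⟨(p : ℕ), h⟩ f else 0

/-- The Levi-Civita symbol `ε_ijk` on `{0,1,2}`. -/
noncomputable def lc (i j k : Fin 3) : ℝ :=
  (((j : ℕ) : ℝ) - ((i : ℕ) : ℝ)) * (((k : ℕ) : ℝ) - ((j : ℕ) : ℝ))
    * (((k : ℕ) : ℝ) - ((i : ℕ) : ℝ)) / 2

/-- The full 3D incompatibility tensor `η_ik = ε_ipm ε_kqn ∂_p ∂_q E_mn` of a
`z`-independent strain. -/
noncomputable def eta2D (Em : Fin 3 → Fin 3 → EuclideanSpace ℝ (Fin 2) → ℝ)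
    (i k : Fin 3) : EuclideanSpace ℝ (Fin 2) → ℝ :=
  fun x => ∑ p, ∑ m, ∑ q, ∑ n, lc i p m * lc k q n * pdz p (pdz q (Em m n)) x


/-!
Because nothing depends on `z`, every term of `η` carrying a `∂₃` drops out, and once mixed
partials commute the nine components of `η` are, up to sign, the Hessian of `E₃₃`
(`η₁₁, η₁₂, η₂₂`), the gradient of `∂₁E₂₃ − ∂₂E₁₃` (`η₁₃, η₂₃` and their transposes) and the
planar compatibility expression (`η₃₃`); these are the paper's 1-based indices, the code's are
0-based. On a connected open set a function with vanishing gradient is constant and one with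
vanishing Hessian is affine.
-/

local notation "ℝ²" => EuclideanSpace ℝ (Fin 2)

@[simp] lemma pd_const (α : Fin 2) (c : ℝ) : pd α (fun _ => c) = 0 := by
  ext x; simp [pd]

@[simp] lemma pd_zero (α : Fin 2) : pd α 0 = 0 := pd_const α 0

@[simp] lemma pdz_zero (f : ℝ² → ℝ) : pdz 0 f = pd 0 f := rfl

@[simp] lemma pdz_one (f : ℝ² → ℝ) : pdz 1 f = pd 1 f := rfl

@[simp] lemma pdz_two (f : ℝ² → ℝ) : pdz 2 f = 0 := rfl

section Components

variable (Em : Fin 3 → Fin 3 → ℝ² → ℝ) (x : ℝ²)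

lemma eta2D_zero_zero : eta2D Em 0 0 x = pd 1 (pd 1 (Em 2 2)) x := by
  norm_num [eta2D, Fin.sum_univ_three, lc]

lemma eta2D_zero_one : eta2D Em 0 1 x = -pd 1 (pd 0 (Em 2 2)) x := by
  norm_num [eta2D, Fin.sum_univ_three, lc]

lemma eta2D_zero_two : eta2D Em 0 2 x = pd 1 (pd 0 (Em 2 1)) x - pd 1 (pd 1 (Em 2 0)) x := by
  norm_num [eta2D, Fin.sum_univ_three, lc]; ring

lemma eta2D_one_zero : eta2D Em 1 0 x = -pd 0 (pd 1 (Em 2 2)) x := by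
  norm_num [eta2D, Fin.sum_univ_three, lc]

lemma eta2D_one_one : eta2D Em 1 1 x = pd 0 (pd 0 (Em 2 2)) x := by
  norm_num [eta2D, Fin.sum_univ_three, lc]

lemma eta2D_one_two : eta2D Em 1 2 x = pd 0 (pd 1 (Em 2 0)) x - pd 0 (pd 0 (Em 2 1)) x := by
  norm_num [eta2D, Fin.sum_univ_three, lc]; ring

lemma eta2D_two_zero : eta2D Em 2 0 x = pd 0 (pd 1 (Em 1 2)) x - pd 1 (pd 1 (Em 0 2)) x := by
  norm_num [eta2D, Fin.sum_univ_three, lc]; ring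

lemma eta2D_two_one : eta2D Em 2 1 x = pd 1 (pd 0 (Em 0 2)) x - pd 0 (pd 0 (Em 1 2)) x := by
  norm_num [eta2D, Fin.sum_univ_three, lc]; ring

lemma eta2D_two_two : eta2D Em 2 2 x = pd 1 (pd 1 (Em 0 0)) x + pd 0 (pd 0 (Em 1 1)) x
    - pd 0 (pd 1 (Em 1 0)) x - pd 1 (pd 0 (Em 0 1)) x := by
  norm_num [eta2D, Fin.sum_univ_three, lc]; ring

end Components

section Calculus

variable {f g : ℝ² → ℝ} {U : Set ℝ²} {x : ℝ²}

lemma fderiv_eq_of_pd_eq (h : ∀ α, pd α f x = pd α g x) : fderiv ℝ f x = fderiv ℝ g x :=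
  ContinuousLinearMap.coe_injective <|
    (EuclideanSpace.basisFun (Fin 2) ℝ).toBasis.ext fun α => by simpa [pd] using h α

lemma pd_eq_of_eqOn_add (hU : IsOpen U) {c : ℝ} (hfg : ∀ y ∈ U, f y = g y + c) (hx : x ∈ U)
    (α : Fin 2) : pd α f x = pd α g x := by
  have hfg' : f =ᶠ[nhds x] fun y => g y + c := Filter.eventually_of_mem (hU.mem_nhds hx) hfg
  simp [pd, hfg'.fderiv_eq, fderiv_add_const]

theorem IsOpen.exists_eq_add_iff_pd_eq (hU : IsOpen U) (hU' : IsPreconnected U)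
    (hf : DifferentiableOn ℝ f U) (hg : DifferentiableOn ℝ g U) :
    (∃ c, ∀ y ∈ U, f y = g y + c) ↔ ∀ y ∈ U, ∀ α, pd α f y = pd α g y :=
  ⟨fun ⟨_, hc⟩ _ hy => pd_eq_of_eqOn_add hU hc hy,
    fun h => hU.exists_eq_add_of_fderiv_eq hU' hf hg fun y hy => fderiv_eq_of_pd_eq (h y hy)⟩

theorem IsOpen.exists_eq_const_iff_pd_eq_zero (hU : IsOpen U) (hU' : IsPreconnected U)
    (hf : DifferentiableOn ℝ f U) :
    (∃ c, ∀ y ∈ U, f y = c) ↔ ∀ y ∈ U, ∀ α, pd α f y = 0 := by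
  simpa using hU.exists_eq_add_iff_pd_eq hU' hf (differentiableOn_const 0)

lemma pd_affine (a₁ a₂ : ℝ) (α : Fin 2) (x : ℝ²) :
    pd α (fun y => a₁ * y 0 + a₂ * y 1) x = ![a₁, a₂] α := by
  let L : ℝ² →L[ℝ] ℝ := a₁ • EuclideanSpace.proj 0 + a₂ • EuclideanSpace.proj 1
  rw [pd, show (fun y : ℝ² => a₁ * y 0 + a₂ * y 1) = L from rfl, L.fderiv]
  fin_cases α <;> simp [L]

lemma pd_contDiffOn {n : WithTop ℕ∞} (hU : IsOpen U) (hf : ContDiffOn ℝ (n + 1) f U)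
    (α : Fin 2) : ContDiffOn ℝ n (pd α f) U :=
  (hf.fderiv_of_isOpen hU le_rfl).clm_apply contDiffOn_const

lemma pd_pd_comm (hf : ContDiffAt ℝ 2 f x) (α β : Fin 2) :
    pd α (pd β f) x = pd β (pd α f) x := by
  have hd : DifferentiableAt ℝ (fderiv ℝ f) x :=
    (hf.fderiv_right (m := 1) le_rfl).differentiableAt one_ne_zero
  have hpd : ∀ γ δ : Fin 2, pd γ (pd δ f) x
      = fderiv ℝ (fderiv ℝ f) x (EuclideanSpace.single γ 1) (EuclideanSpace.single δ 1) := by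
    intro γ δ
    change fderiv ℝ (fun y => fderiv ℝ f y (EuclideanSpace.single δ 1)) x _ = _
    simp [fderiv_clm_apply hd (differentiableAt_const _)]
  rw [hpd, hpd]
  exact hf.isSymmSndFDerivAt (by simp) _ _

theorem IsOpen.exists_affine_iff_pd_pd_eq_zero (hU : IsOpen U) (hU' : IsPreconnected U)
    (hf : ContDiffOn ℝ 2 f U) :
    (∃ a₁ a₂ b : ℝ, ∀ y ∈ U, f y = a₁ * y 0 + a₂ * y 1 + b) ↔
      ∀ y ∈ U, ∀ α β, pd α (pd β f) y = 0 := by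
  have hpd : ∀ β, DifferentiableOn ℝ (pd β f) U := fun β =>
    (pd_contDiffOn (n := 1) hU hf β).differentiableOn one_ne_zero
  constructor
  · rintro ⟨a₁, a₂, b, hab⟩ y hy α β
    have hβ : ∀ z ∈ U, pd β f z = ![a₁, a₂] β := fun z hz =>
      (pd_eq_of_eqOn_add hU hab hz β).trans (pd_affine a₁ a₂ β z)
    exact (hU.exists_eq_const_iff_pd_eq_zero hU' (hpd β)).1 ⟨_, hβ⟩ y hy α
  · intro h
    choose a ha using fun β =>
      (hU.exists_eq_const_iff_pd_eq_zero hU' (hpd β)).2 fun y hy α => h y hy α β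
    obtain ⟨b, hb⟩ := (hU.exists_eq_add_iff_pd_eq hU' (hf.differentiableOn two_ne_zero)
      (g := fun y => a 0 * y 0 + a 1 * y 1) (by fun_prop)).2 fun y hy α => by
        rw [ha α y hy, pd_affine]
        fin_cases α <;> rfl
    exact ⟨a 0, a 1, b, hb⟩

end Calculus

lemma eta2D_eq_zero_iff {Em : Fin 3 → Fin 3 → ℝ² → ℝ} {x : ℝ²} (hsym : ∀ i j, Em i j = Em j i)
    (hcomm : ∀ i j α β, pd α (pd β (Em i j)) x = pd β (pd α (Em i j)) x) :
    (∀ i k, eta2D Em i k x = 0) ↔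
      (∀ α β, pd α (pd β (Em 2 2)) x = 0) ∧
      (∀ α, pd α (pd 0 (Em 1 2)) x = pd α (pd 1 (Em 0 2)) x) ∧
      pd 1 (pd 1 (Em 0 0)) x + pd 0 (pd 0 (Em 1 1)) x - 2 * pd 0 (pd 1 (Em 0 1)) x = 0 := by
  simp only [Fin.forall_fin_succ (n := 2), Fin.forall_fin_two, Fin.succ_zero_eq_one,
    Fin.succ_one_eq_two]
  rw [eta2D_zero_zero, eta2D_zero_one, eta2D_zero_two, eta2D_one_zero, eta2D_one_one,
    eta2D_one_two, eta2D_two_zero, eta2D_two_one, eta2D_two_two, hsym 2 1, hsym 2 0, hsym 1 0,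
    hcomm 0 1 0 1, hcomm 1 2 0 1, hcomm 0 2 0 1]
  constructor
  · rintro ⟨⟨h00, h01, h02⟩, ⟨h10, h11, h12⟩, -, -, h22⟩
    refine ⟨⟨⟨h11, ?_⟩, ?_, h00⟩, ⟨?_, ?_⟩, ?_⟩ <;> linarith
  · rintro ⟨⟨⟨h00, h01⟩, h10, h11⟩, ⟨hK0, hK1⟩, hcompat⟩
    refine ⟨⟨?_, ?_, ?_⟩, ⟨?_, ?_, ?_⟩, ?_, ?_, ?_⟩ <;> linarith

/-- **2D compatibility characterization (equations (1.3) of the paper):** on an open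
connected planar domain, the full 3D incompatibility of a smooth `z`-independent
symmetric strain vanishes iff the three planar compatibility conditions hold with
suitable constants `K, a₁, a₂, b`. -/
theorem compatibility_2D_characterization (U : Set (EuclideanSpace ℝ (Fin 2)))
    (hU : IsOpen U) (hconn : IsConnected U)
    (Em : Fin 3 → Fin 3 → EuclideanSpace ℝ (Fin 2) → ℝ)
    (hE : ∀ i j, ContDiffOn ℝ (⊤ : ℕ∞) (Em i j) U)
    (hsym : ∀ i j, Em i j = Em j i) :
    (∀ x ∈ U, ∀ i k, eta2D Em i k x = 0) ↔
    ∃ K a₁ a₂ b : ℝ, ∀ x ∈ U,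
      (pd 1 (pd 1 (Em 0 0)) x + pd 0 (pd 0 (Em 1 1)) x
        - 2 * pd 0 (pd 1 (Em 0 1)) x = 0) ∧
      (pd 0 (Em 1 2) x - pd 1 (Em 0 2) x = K) ∧
      (Em 2 2 x = a₁ * x 0 + a₂ * x 1 + b) := by
  have hE2 : ∀ i j, ContDiffOn ℝ 2 (Em i j) U := fun i j =>
    (hE i j).of_le (WithTop.coe_le_coe.2 le_top)
  have hpd : ∀ i j α, DifferentiableOn ℝ (pd α (Em i j)) U := fun i j α =>
    (pd_contDiffOn (n := 1) hU (hE2 i j) α).differentiableOn one_ne_zero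
  have hK := hU.exists_eq_add_iff_pd_eq hconn.isPreconnected (hpd 1 2 0) (hpd 0 2 1)
  have hE33 := hU.exists_affine_iff_pd_pd_eq_zero hconn.isPreconnected (hE2 2 2)
  have hη : ∀ x ∈ U, _ := fun x hx => eta2D_eq_zero_iff hsym fun i j =>
    pd_pd_comm ((hE2 i j).contDiffAt (hU.mem_nhds hx))
  constructor
  · intro h
    obtain ⟨K, hK⟩ := hK.2 fun x hx => ((hη x hx).1 (h x hx)).2.1
    obtain ⟨a₁, a₂, b, hab⟩ := hE33.2 fun x hx => ((hη x hx).1 (h x hx)).1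
    exact ⟨K, a₁, a₂, b, fun x hx =>
      ⟨((hη x hx).1 (h x hx)).2.2, sub_eq_iff_eq_add'.2 (hK x hx), hab x hx⟩⟩
  · rintro ⟨K, a₁, a₂, b, h⟩ x hx
    exact (hη x hx).2 ⟨hE33.1 ⟨a₁, a₂, b, fun y hy => (h y hy).2.2⟩ x hx,
      hK.1 ⟨K, fun y hy => sub_eq_iff_eq_add'.1 (h y hy).2.1⟩ x hx, (h x hx).1⟩
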